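/- For every integer l ≥ 165 and every z ∈ (0,1), I(z) < 0. -/

import Mathlib

/-!
Put `s = 1 - z`, `t = z^(l-1)`, `w = 1 - t` and `u = 3z^l/l`. Multiplying `H(0,z)` by `w²` gives
the polynomial `G(s, w, A) = A³w² + 6sw³A - s + 8s²w⁷` at `A = u - s(1 - 4t)`, so it suffices to
show `G < 0`. Since `l ≥ 165`, the estimates `m z^m (1-z) ≤ 1 - z^m ≤ m (1-z)` give `u ≤ t/55`,
`uw ≤ 3st` and `164 st ≤ w`. If `s ≤ 1/20`, every positive term of `wG` is a small multiple of
`sw`. If `s ≥ 1/20`, `G` is increasing in `A`, and at `A = t/55 - s(1 - 4t)` it is at most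
`s(t - (1-s)²)`, which is negative because `t < z²`.
-/

open Real

/-- `H(u,z)` for the `(l,3,3)` MN codes. -/
noncomputable def Hfun (l : ℕ) (u z : ℝ) : ℝ :=
  (u + 3 * z^l / (l:ℝ) - (1-z) * (1 - 4 * z^(l-1)))^3
    + 6 * (1-z) * (1 - z^(l-1)) * (u + 3 * z^l / (l:ℝ) - (1-z) * (1 - 4 * z^(l-1)))
    - (1-z) * (1 - z^(l-1)) ^ (-2 : ℤ)
    + 8 * (1-z)^2 * (1 - z^(l-1))^5

/-- `I(z) := l³(1-z^{l-1})²/((1-z)z²) · H(0,z)`. -/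
noncomputable def Ifun (l : ℕ) (z : ℝ) : ℝ :=
  (l:ℝ)^3 * (1 - z^(l-1))^2 / ((1-z) * z^2) * Hfun l 0 z

open Finset

def reducedH (s w A : ℝ) : ℝ := A^3 * w^2 + 6 * s * w^3 * A - s + 8 * s^2 * w^7

lemma Hfun_zero_mul_sq {l : ℕ} {z : ℝ} (hz : z^(l-1) ≠ 1) :
    Hfun l 0 z * (1 - z^(l-1))^2 =
      reducedH (1-z) (1 - z^(l-1)) (3 * z^l / l - (1-z) * (1 - 4 * z^(l-1))) := by
  have hw : 1 - z^(l-1) ≠ 0 := sub_ne_zero.2 hz.symm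
  unfold Hfun reducedH
  rw [zpow_neg, zpow_ofNat]
  field_simp
  ring

lemma reducedH_monotone {s w : ℝ} (hs : 0 ≤ s) (hw : 0 ≤ w) : Monotone (reducedH s w) := by
  intro a b hab
  unfold reducedH
  gcongr ?_ * _ + _ * ?_ - _ + _
  exact (Odd.pow_le_pow (by decide)).2 hab

lemma reducedH_neg_of_le_one_div_twenty {s t w A : ℝ} (hs0 : 0 < s) (hs : s ≤ 1/20)
    (ht0 : 0 ≤ t) (ht1 : t ≤ 1) (hw0 : 0 < w) (hw1 : w ≤ 1)
    (hA : A * w ≤ 7 * (s * t)) (hst : 164 * (s * t) ≤ w) : reducedH s w A < 0 := by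
  have hst0 : 0 ≤ s * t := by positivity
  have hcube : (A * w)^3 ≤ 343 / 26896 * (s * w) :=
    calc (A * w)^3 ≤ (7 * (s * t))^3 := (Odd.pow_le_pow (by decide)).2 hA
      _ = 343 * (s * t) * (s * t)^2 := by ring
      _ ≤ 343 * s * (w / 164)^2 := by
        gcongr
        · exact mul_le_of_le_one_right hs0.le ht1
        · linarith
      _ ≤ 343 / 26896 * (s * w) := by
        nlinarith [mul_le_mul_of_nonneg_left hw1 (mul_nonneg hs0.le hw0.le)]
  have hmixed : 6 * s * w^3 * (A * w) ≤ 42 / 164 * (s * w) :=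
    calc 6 * s * w^3 * (A * w) ≤ 6 * s * w^3 * (7 * (s * t)) := by gcongr
      _ = 42 * s * w^3 * (s * t) := by ring
      _ ≤ 42 * s * w^3 * (w / 164) := by gcongr; linarith
      _ = 42 / 164 * s * w^4 := by ring
      _ ≤ 42 / 164 * (s * w) := by
        rw [mul_assoc]
        gcongr
        exact pow_le_of_le_one hw0.le hw1 (by norm_num)
  have hlast : 8 * s^2 * w^8 ≤ 2 / 5 * (s * w) :=
    calc 8 * s^2 * w^8 ≤ 8 * (s / 20) * w := by
          gcongr
          · nlinarith
          · exact pow_le_of_le_one hw0.le hw1 (by norm_num)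
      _ = 2 / 5 * (s * w) := by ring
  have hmul : reducedH s w A * w < 0 := by
    have : reducedH s w A * w = (A * w)^3 + 6 * s * w^3 * (A * w) - s * w + 8 * s^2 * w^8 := by
      unfold reducedH; ring
    rw [this]
    nlinarith [mul_pos hs0 hw0]
  exact neg_of_mul_neg_left hmul hw0.le

/-- The bound `s(t - (1-s)²)` comes from writing the left side as `-s(1-s)² + t R(s,t)` and
checking `R ≤ s` coefficientwise in `s`. -/
lemma reducedH_le_of_one_div_twenty_le {s t : ℝ} (hs : 1/20 ≤ s) (hs1 : s ≤ 1)
    (ht0 : 0 ≤ t) (ht1 : t ≤ 1) :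
    reducedH s (1-t) (t/55 - s * (1 - 4*t)) ≤ s * (t - (1-s)^2) := by
  have ht : 0 ≤ 1 - t := by linarith
  have hP1 : -993/3025*t + 1008/3025*t^2 - 357/3025*t^3 + 12/3025*t^4 ≤ 0 := by
    nlinarith [mul_nonneg ht0 ht0, mul_nonneg (mul_nonneg ht0 ht0) ht0, sq_nonneg (t * (1-t))]
  have hP3 : 0 ≤ 14 - 73*t + 172*t^2 - 176*t^3 + 64*t^4 := by
    nlinarith [sq_nonneg (t * (1-t)), sq_nonneg (1-t), sq_nonneg (2*t - 1),
      mul_nonneg ht0 ht, sq_nonneg (8*t^2 - 11*t + 2)]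
  have hP2 : 3/55 + 49/11*t - 141/5*t^2 + 856/11*t^3 - 5672/55*t^4 + 56*t^5 - 8*t^6 ≤ 1/2 := by
    nlinarith [sq_nonneg (t * (1-t)), sq_nonneg (t^2 * (1-t)), sq_nonneg (t * (1-t)^2),
      mul_nonneg ht0 ht, sq_nonneg (2*t - 1), sq_nonneg (t - 1/5),
      mul_nonneg (mul_nonneg ht0 ht0) ht, sq_nonneg (t * (2*t - 1)),
      sq_nonneg ((1-t) * (2*t - 1)), sq_nonneg (t^2 * (2*t - 1))]
  have hP0 : (t * (1-t))^2 ≤ 1/16 := by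
    have : t * (1-t) ≤ 1/4 := by nlinarith [sq_nonneg (2*t - 1)]
    nlinarith [mul_nonneg ht0 ht]
  have hR : (t * (1-t))^2 / 166375
      + s * (6/55 + (-993/3025*t + 1008/3025*t^2 - 357/3025*t^3 + 12/3025*t^4))
      + s^2 * (-767/55 + 852/11*t - 1001/5*t^2 + 2792/11*t^3 - 9192/55*t^4 + 56*t^5 - 8*t^6)
      + s^3 * (14 - 73*t + 172*t^2 - 176*t^3 + 64*t^4) ≤ s := by
    have hs0 : 0 ≤ s := by linarith
    nlinarith [mul_nonpos_of_nonneg_of_nonpos hs0 hP1, mul_le_mul_of_nonneg_left hP2 (sq_nonneg s),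
      mul_nonneg (mul_nonneg (sq_nonneg s) (sub_nonneg.2 hs1)) hP3]
  unfold reducedH
  nlinarith [mul_le_mul_of_nonneg_left hR ht0]

lemma reducedH_neg {s t u : ℝ} (hs0 : 0 < s) (hs1 : s < 1) (ht0 : 0 < t) (ht1 : t < 1)
    (hu : u ≤ t/55) (huw : u * (1-t) ≤ 3 * (s * t)) (hst : 164 * (s * t) ≤ 1 - t)
    (htz : t < (1-s)^2) :
    reducedH s (1-t) (u - s * (1 - 4*t)) < 0 := by
  rcases le_or_gt s (1/20) with hsmall | hlarge
  · refine reducedH_neg_of_le_one_div_twenty hs0 hsmall ht0.le ht1.le (by linarith) (by linarith)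
      ?_ hst
    nlinarith [mul_nonneg (mul_nonneg hs0.le ht0.le) ht0.le]
  · calc reducedH s (1-t) (u - s * (1 - 4*t))
        ≤ reducedH s (1-t) (t/55 - s * (1 - 4*t)) :=
          reducedH_monotone hs0.le (by linarith) (by linarith)
      _ ≤ s * (t - (1-s)^2) := reducedH_le_of_one_div_twenty_le hlarge.le hs1.le ht0.le ht1.le
      _ < 0 := mul_neg_of_pos_of_neg hs0 (by linarith)

lemma one_sub_pow_le_mul_one_sub {z : ℝ} (hz : 0 ≤ z) (m : ℕ) : 1 - z^m ≤ m * (1 - z) := by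
  have := one_add_mul_le_pow (a := z - 1) (by linarith) m
  rw [add_sub_cancel] at this
  linarith

lemma mul_pow_mul_one_sub_le_one_sub_pow {z : ℝ} (hz0 : 0 ≤ z) (hz1 : z ≤ 1) (m : ℕ) :
    m * z^m * (1 - z) ≤ 1 - z^m := by
  rw [← geom_sum_mul_neg]
  gcongr
  calc (m : ℝ) * z^m = ∑ _ ∈ range m, z^m := by simp
    _ ≤ ∑ i ∈ range m, z^i :=
      sum_le_sum fun i hi => pow_le_pow_of_le_one hz0 hz1 (mem_range.1 hi).le

/-- `I(z) < 0` on `(0,1)` for `l ≥ 165`. -/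
theorem stmt8 (l : ℕ) (hl : 165 ≤ l) (z : ℝ)
    (hz : z ∈ Set.Ioo (0:ℝ) 1) : Ifun l z < 0 := by
  obtain ⟨hz0, hz1⟩ := hz
  set t := z^(l-1) with ht
  have hl' : (165 : ℝ) ≤ l := by exact_mod_cast hl
  have hm : ((l - 1 : ℕ) : ℝ) = l - 1 := by push_cast [Nat.cast_sub (by omega : 1 ≤ l)]; ring
  have hzl : z^l = z * t := by rw [ht, ← pow_succ', Nat.sub_add_cancel (by omega)]
  have ht0 : 0 < t := pow_pos hz0 _
  have ht1 : t < 1 := pow_lt_one₀ hz0.le hz1 (by omega)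
  have htz : t < (1 - (1-z))^2 := by
    rw [sub_sub_cancel]; exact pow_lt_pow_right_of_lt_one₀ hz0 hz1 (by omega)
  have hwt := one_sub_pow_le_mul_one_sub hz0.le (l-1)
  have hst := mul_pow_mul_one_sub_le_one_sub_pow hz0.le hz1.le (l-1)
  rw [hm] at hwt hst
  have hu : 3 * z^l / l ≤ t/55 := by
    rw [div_le_div_iff₀ (by positivity) (by norm_num), hzl]
    nlinarith [mul_le_mul_of_nonneg_left hl' ht0.le]
  have huw : 3 * z^l / l * (1 - t) ≤ 3 * ((1-z) * t) := by
    rw [hzl, div_mul_eq_mul_div, div_le_iff₀ (by positivity)]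
    nlinarith [mul_le_mul_of_nonneg_left hwt ht0.le, mul_pos ht0 (sub_pos.2 hz1),
      mul_pos (mul_pos ht0 (sub_pos.2 ht1)) (sub_pos.2 hz1)]
  have hG := reducedH_neg (by linarith) (by linarith) ht0 ht1 hu huw (by nlinarith) htz
  rw [← Hfun_zero_mul_sq ht1.ne] at hG
  exact mul_neg_of_pos_of_neg (by have := sub_pos.2 hz1; positivity)
    (neg_of_mul_neg_left hG (sq_nonneg _))
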